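/- Let v be a maximal monotone map on ℝ^d equal to the identity outside a bounded convex set closure(Ω), and define the cost c_v(a,b) := inf over finite chains a = x₁, x₂, …, x_N = b of Σᵢ ℓ_v(xᵢ, x_{i+1}). Then c_v is symmetric, sub-additive (c_v(a,c) ≤ c_v(a,b) + c_v(b,c)), continuous on ℝ^d × ℝ^d, and satisfies √2·|d(a,Ω) − d(b,Ω)| ≤ c_v(a,b) ≤ ℓ_v(a,b) for all a,b. -/

import Mathlib

/-- A set-valued map on `ℝ^d` is monotone. -/
def MonotoneSetMap {d : ℕ} (v : EuclideanSpace ℝ (Fin d) → Set (EuclideanSpace ℝ (Fin d))) :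
    Prop :=
  ∀ x₁ x₂ y₁ y₂, y₁ ∈ v x₁ → y₂ ∈ v x₂ → 0 ≤ (inner ℝ (y₁ - y₂) (x₁ - x₂) : ℝ)

/-- Maximal monotone set-valued map with full domain. -/
def MaxMonotone {d : ℕ} (v : EuclideanSpace ℝ (Fin d) → Set (EuclideanSpace ℝ (Fin d))) :
    Prop :=
  MonotoneSetMap v ∧ (∀ x, (v x).Nonempty) ∧
    ∀ w : EuclideanSpace ℝ (Fin d) → Set (EuclideanSpace ℝ (Fin d)),
      MonotoneSetMap w → (∀ x, v x ⊆ w x) → w = v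

/-- `ℓ_v(a,b) := inf { √(2⟨b' − a', b − a⟩) : a' ∈ v(a), b' ∈ v(b) }`. -/
noncomputable def ellV {d : ℕ} (v : EuclideanSpace ℝ (Fin d) → Set (EuclideanSpace ℝ (Fin d)))
    (a b : EuclideanSpace ℝ (Fin d)) : ℝ :=
  sInf {r : ℝ | ∃ a' ∈ v a, ∃ b' ∈ v b, r = Real.sqrt (2 * (inner ℝ (b' - a') (b - a) : ℝ))}

/-- `c_v(a,b)`: infimum over finite chains joining `a` to `b` of the sums of `ℓ_v`. -/
noncomputable def costV {d : ℕ} (v : EuclideanSpace ℝ (Fin d) → Set (EuclideanSpace ℝ (Fin d)))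
    (a b : EuclideanSpace ℝ (Fin d)) : ℝ :=
  sInf {r : ℝ | ∃ (N : ℕ) (x : ℕ → EuclideanSpace ℝ (Fin d)), 0 < N ∧ x 0 = a ∧ x N = b ∧
    r = ∑ i ∈ Finset.range N, ellV v (x i) (x (i+1))}

/-!
For `a' ∈ v a` and `b' ∈ v b`, testing monotonicity against the fixed points of `v` outside
`closure Ω` gives `(d(a,Ω) - d(b,Ω))² ≤ ⟪b' - a', b - a⟫`, hence `√2 |d(a,Ω) - d(b,Ω)| ≤ ℓ_v(a,b)`,
and this bound telescopes along chains. Reversing and concatenating chains gives symmetry and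
sub-additivity of `c_v`. Monotonicity also forces `v` to map `closure Ω` into itself, so
`‖x' - x‖ ≤ diam Ω` for `x' ∈ v x` and `c_v(a,b) ≤ ℓ_v(a,b) = O(|a - b|^{1/2})`; together with
the triangle inequality this gives continuity.
-/

open Metric Finset Filter Topology

section ChainCost

variable {X : Type*}

def chainSums (ℓ : X → X → ℝ) (a b : X) : Set ℝ :=
  {r | ∃ (N : ℕ) (x : ℕ → X), 0 < N ∧ x 0 = a ∧ x N = b ∧
    r = ∑ i ∈ range N, ℓ (x i) (x (i + 1))}

/-- `costV v` unfolds to `chainCost (ellV v)`. -/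
noncomputable def chainCost (ℓ : X → X → ℝ) (a b : X) : ℝ :=
  sInf (chainSums ℓ a b)

variable {ℓ : X → X → ℝ}

lemma self_mem_chainSums (a b : X) : ℓ a b ∈ chainSums ℓ a b :=
  ⟨1, fun i => if i = 0 then a else b, one_pos, rfl, rfl, by simp⟩

lemma chainSums_swap_subset (hℓ : ∀ a b, ℓ a b = ℓ b a) (a b : X) :
    chainSums ℓ a b ⊆ chainSums ℓ b a := by
  rintro r ⟨N, x, hN, rfl, rfl, rfl⟩
  refine ⟨N, fun i => x (N - i), hN, by simp, by simp, ?_⟩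
  rw [← sum_range_reflect]
  refine sum_congr rfl fun j hj => ?_
  have := mem_range.1 hj
  show _ = ℓ (x (N - j)) (x (N - (j + 1)))
  rw [hℓ, show N - 1 - j + 1 = N - j by omega, show N - (j + 1) = N - 1 - j by omega]

lemma add_mem_chainSums {a b c : X} {r s : ℝ} (hr : r ∈ chainSums ℓ a b)
    (hs : s ∈ chainSums ℓ b c) : r + s ∈ chainSums ℓ a c := by
  obtain ⟨N₁, x, hN₁, rfl, hxN, rfl⟩ := hr
  obtain ⟨N₂, y, hN₂, hy0, rfl, rfl⟩ := hs
  set z : ℕ → X := fun i => if i ≤ N₁ then x i else y (i - N₁)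
  have hz : ∀ j, z (N₁ + j) = y j := by
    rintro (_ | j)
    · simp [z, hxN, hy0]
    · simp [z]
  refine ⟨N₁ + N₂, z, by omega, by simp [z], by rw [hz], ?_⟩
  rw [sum_range_add]
  congr 1 <;> refine sum_congr rfl fun i hi => ?_
  · have := mem_range.1 hi
    simp [z, show i ≤ N₁ by omega, show i + 1 ≤ N₁ by omega]
  · rw [hz, add_assoc, hz]

lemma abs_sub_le_of_mem_chainSums {φ : X → ℝ} (hφ : ∀ a b, |φ a - φ b| ≤ ℓ a b) {a b : X}
    {r : ℝ} (hr : r ∈ chainSums ℓ a b) : |φ a - φ b| ≤ r := by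
  obtain ⟨N, x, -, rfl, rfl, rfl⟩ := hr
  rw [← sum_range_sub' (fun i => φ (x i))]
  exact (abs_sum_le_sum_abs _ _).trans (sum_le_sum fun i _ => hφ _ _)

lemma bddBelow_chainSums (hℓ : ∀ a b, 0 ≤ ℓ a b) (a b : X) : BddBelow (chainSums ℓ a b) :=
  ⟨0, by
    rintro _ ⟨N, x, -, -, -, rfl⟩
    exact sum_nonneg fun i _ => hℓ _ _⟩

lemma chainCost_le (hℓ : ∀ a b, 0 ≤ ℓ a b) (a b : X) : chainCost ℓ a b ≤ ℓ a b :=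
  csInf_le (bddBelow_chainSums hℓ a b) (self_mem_chainSums a b)

lemma abs_sub_le_chainCost {φ : X → ℝ} (hφ : ∀ a b, |φ a - φ b| ≤ ℓ a b) (a b : X) :
    |φ a - φ b| ≤ chainCost ℓ a b :=
  le_csInf ⟨_, self_mem_chainSums a b⟩ fun _ => abs_sub_le_of_mem_chainSums hφ

lemma chainCost_comm (hℓ : ∀ a b, ℓ a b = ℓ b a) (a b : X) :
    chainCost ℓ a b = chainCost ℓ b a := by
  rw [chainCost, chainCost,
    (chainSums_swap_subset hℓ a b).antisymm (chainSums_swap_subset hℓ b a)]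

lemma chainCost_triangle (hℓ : ∀ a b, 0 ≤ ℓ a b) (a b c : X) :
    chainCost ℓ a c ≤ chainCost ℓ a b + chainCost ℓ b c := by
  rw [chainCost, chainCost, chainCost, ← csInf_add ⟨_, self_mem_chainSums a b⟩
    (bddBelow_chainSums hℓ a b) ⟨_, self_mem_chainSums b c⟩ (bddBelow_chainSums hℓ b c)]
  refine csInf_le_csInf (bddBelow_chainSums hℓ a c) ⟨_, Set.add_mem_add
    (self_mem_chainSums a b) (self_mem_chainSums b c)⟩ ?_
  rintro _ ⟨r, hr, s, hs, rfl⟩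
  exact add_mem_chainSums hr hs

end ChainCost

theorem continuous_of_le_of_triangle {X : Type*} [PseudoMetricSpace X] {c : X → X → ℝ}
    (hsymm : ∀ a b, c a b = c b a) (htri : ∀ a b e, c a e ≤ c a b + c b e) {g : ℝ → ℝ}
    (hg : Tendsto g (𝓝 0) (𝓝 0)) (hle : ∀ a b, c a b ≤ g (dist a b)) :
    Continuous fun p : X × X => c p.1 p.2 := by
  refine continuous_iff_continuousAt.2 fun ⟨a₀, b₀⟩ => tendsto_iff_dist_tendsto_zero.2 ?_
  have hdist : ∀ p : X × X, dist (c p.1 p.2) (c a₀ b₀) ≤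
      g (dist p.1 a₀) + g (dist p.2 b₀) := by
    rintro ⟨a, b⟩
    rw [Real.dist_eq, abs_sub_le_iff]
    constructor <;> linarith [htri a a₀ b, htri a₀ b₀ b, htri a₀ a b₀, htri a b b₀,
      hsymm a₀ a, hsymm b₀ b, hle a a₀, hle b b₀]
  have hg₁ : Tendsto (fun p : X × X => g (dist p.1 a₀)) (𝓝 (a₀, b₀)) (𝓝 0) :=
    hg.comp (tendsto_iff_dist_tendsto_zero.1 (continuous_fst.tendsto _))
  have hg₂ : Tendsto (fun p : X × X => g (dist p.2 b₀)) (𝓝 (a₀, b₀)) (𝓝 0) :=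
    hg.comp (tendsto_iff_dist_tendsto_zero.1 (continuous_snd.tendsto _))
  exact squeeze_zero (fun _ => dist_nonneg) hdist (by simpa using hg₁.add hg₂)

section EuclideanSpace

variable {d : ℕ} {v : EuclideanSpace ℝ (Fin d) → Set (EuclideanSpace ℝ (Fin d))}

local notation "E" => EuclideanSpace ℝ (Fin d)

namespace MonotoneSetMap

lemma notMem_self_of_mem_openSegment (hmono : MonotoneSetMap v) {x x' p : E}
    (hx' : x' ∈ v x) (hne : x ≠ x') (hp : p ∈ openSegment ℝ x x') : p ∉ v p := by
  obtain ⟨α, β, hα, hβ, hαβ, rfl⟩ := hp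
  intro hpp
  have h := hmono _ _ _ _ hpp hx'
  obtain rfl : α = 1 - β := eq_sub_of_add_eq hαβ
  rw [show (1 - β) • x + β • x' - x' = (1 - β) • (x - x') by module,
    show (1 - β) • x + β • x' - x = (-β) • (x - x') by module, real_inner_smul_left,
    real_inner_smul_right, real_inner_self_eq_norm_sq] at h
  have := norm_pos_iff.2 (sub_ne_zero.2 hne)
  nlinarith [mul_pos hα hβ, mul_pos (mul_pos hα hβ) (pow_pos this 2)]

lemma segment_subset_of_mem_of_ne (hmono : MonotoneSetMap v) {K : Set E} (hK : IsClosed K)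
    (hid : ∀ x ∉ K, v x = {x}) {x x' : E} (hx' : x' ∈ v x) (hne : x ≠ x') :
    segment ℝ x x' ⊆ K := by
  refine segment_subset_closure_openSegment.trans (closure_minimal (fun p hp => ?_) hK)
  by_contra hpK
  exact hmono.notMem_self_of_mem_openSegment hx' hne hp (by rw [hid p hpK]; rfl)

lemma norm_sub_le_diam (hmono : MonotoneSetMap v) {K : Set E} (hK : IsClosed K)
    (hKb : Bornology.IsBounded K) (hid : ∀ x ∉ K, v x = {x}) {x x' : E} (hx' : x' ∈ v x) :
    ‖x' - x‖ ≤ diam K := by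
  rcases eq_or_ne x x' with rfl | hne
  · simpa using diam_nonneg
  · have h := hmono.segment_subset_of_mem_of_ne hK hid hx' hne
    rw [← dist_eq_norm]
    exact dist_le_diam_of_mem hKb (h (right_mem_segment _ _ _)) (h (left_mem_segment _ _ _))

/-- The points of the segment `[a, b]` closer to `a` than `infDist a Ω` are fixed points of `v`;
testing monotonicity against them gives `infDist a Ω * ‖b - a‖ ≤ ⟪b' - a, b - a⟫`. -/
lemma infDist_sq_le_inner (hmono : MonotoneSetMap v) {Ω : Set E}
    (hid : ∀ x ∉ closure Ω, v x = {x}) {a b b' : E} (ha : a ∉ closure Ω)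
    (hb : b ∈ closure Ω) (hb' : b' ∈ v b) : infDist a Ω ^ 2 ≤ inner ℝ (b' - a) (b - a) := by
  have hδL : infDist a Ω ≤ ‖b - a‖ := by
    rw [← infDist_closure, ← dist_eq_norm']
    exact infDist_le_dist_of_mem hb
  set δ := infDist a Ω
  set L := ‖b - a‖
  set X : ℝ := inner ℝ (b' - a) (b - a)
  have hseg : ∀ s : ℝ, s < 1 → a + s • (b - a) ∉ closure Ω → s * L ^ 2 ≤ X := by
    intro s hs hout
    have h := hmono b (a + s • (b - a)) b' _ hb' (by rw [hid _ hout]; rfl)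
    rw [show b' - (a + s • (b - a)) = (b' - a) - s • (b - a) by module,
      show b - (a + s • (b - a)) = (1 - s) • (b - a) by module, real_inner_smul_right,
      inner_sub_left, real_inner_smul_left, real_inner_self_eq_norm_sq] at h
    nlinarith
  have hX0 : 0 ≤ X := by simpa using hseg 0 one_pos (by simpa using ha)
  suffices δ * L ≤ X by nlinarith [infDist_nonneg (x := a) (s := Ω)]
  by_contra! h
  have hL : 0 < L := by
    by_contra! hL
    nlinarith [norm_nonneg (b - a), infDist_nonneg (x := a) (s := Ω)]
  obtain ⟨s, hXs, hsδ⟩ : ∃ s, X / L ^ 2 < s ∧ s < δ / L :=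
    exists_between (by rw [div_lt_div_iff₀ (by positivity) hL]; nlinarith)
  have hs0 : 0 ≤ s := (div_nonneg hX0 (sq_nonneg L)).trans hXs.le
  refine absurd (hseg s ?_ fun hmem => ?_) (not_le.2 ((div_lt_iff₀ (by positivity)).1 hXs))
  · exact hsδ.trans_le ((div_le_one hL).2 hδL)
  · have := infDist_le_dist_of_mem (x := a) hmem
    rw [infDist_closure, dist_self_add_right, norm_smul, Real.norm_of_nonneg hs0] at this
    linarith [(lt_div_iff₀ hL).1 hsδ]

lemma sq_infDist_sub_le_inner (hmono : MonotoneSetMap v) {Ω : Set E}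
    (hid : ∀ x ∉ closure Ω, v x = {x}) {a b a' b' : E} (ha' : a' ∈ v a) (hb' : b' ∈ v b) :
    (infDist a Ω - infDist b Ω) ^ 2 ≤ inner ℝ (b' - a') (b - a) := by
  have hfix : ∀ {x x'}, x ∉ closure Ω → x' ∈ v x → x = x' := fun hx hx' => by
    rw [hid _ hx] at hx'
    exact hx'.symm
  by_cases ha : a ∈ closure Ω <;> by_cases hb : b ∈ closure Ω
  · simpa [infDist_zero_of_mem_closure ha, infDist_zero_of_mem_closure hb]
      using hmono b a b' a' hb' ha'
  · obtain rfl := hfix hb hb'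
    rw [infDist_zero_of_mem_closure ha, zero_sub, neg_sq, ← inner_neg_neg, neg_sub, neg_sub]
    exact hmono.infDist_sq_le_inner hid hb ha ha'
  · obtain rfl := hfix ha ha'
    rw [infDist_zero_of_mem_closure hb, sub_zero]
    exact hmono.infDist_sq_le_inner hid ha hb hb'
  · obtain rfl := hfix ha ha'
    obtain rfl := hfix hb hb'
    have := (lipschitz_infDist_pt Ω).dist_le_mul a b
    rw [Real.dist_eq, NNReal.coe_one, one_mul, dist_eq_norm'] at this
    rw [real_inner_self_eq_norm_sq]
    exact sq_le_sq' (abs_le.1 this).1 (abs_le.1 this).2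

end MonotoneSetMap

lemma ellV_comm (v : E → Set E) (a b : E) : ellV v a b = ellV v b a := by
  unfold ellV
  congr 1
  ext r
  constructor <;> rintro ⟨a', ha', b', hb', rfl⟩ <;>
    exact ⟨b', hb', a', ha', by rw [← inner_neg_neg, neg_sub, neg_sub]⟩

lemma ellV_nonneg (a b : E) : 0 ≤ ellV v a b :=
  Real.sInf_nonneg (by rintro _ ⟨_, _, _, _, rfl⟩; exact Real.sqrt_nonneg _)

lemma ellV_le_sqrt_inner {a b a' b' : E} (ha' : a' ∈ v a) (hb' : b' ∈ v b) :
    ellV v a b ≤ √(2 * inner ℝ (b' - a') (b - a)) :=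
  csInf_le ⟨0, by rintro _ ⟨_, _, _, _, rfl⟩; exact Real.sqrt_nonneg _⟩ ⟨a', ha', b', hb', rfl⟩

lemma sqrt_two_mul_abs_infDist_sub_le_ellV (hmono : MonotoneSetMap v)
    (hne : ∀ x, (v x).Nonempty) {Ω : Set E} (hid : ∀ x ∉ closure Ω, v x = {x}) (a b : E) :
    √2 * |infDist a Ω - infDist b Ω| ≤ ellV v a b := by
  obtain ⟨a', ha'⟩ := hne a
  obtain ⟨b', hb'⟩ := hne b
  refine le_csInf ⟨_, a', ha', b', hb', rfl⟩ ?_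
  rintro _ ⟨a', ha', b', hb', rfl⟩
  rw [← Real.sqrt_sq_eq_abs, ← Real.sqrt_mul zero_le_two]
  exact Real.sqrt_le_sqrt (by linarith [hmono.sq_infDist_sub_le_inner hid ha' hb'])

lemma ellV_le_of_norm_sub_le (hne : ∀ x, (v x).Nonempty) {C : ℝ}
    (hC : ∀ x, ∀ x' ∈ v x, ‖x' - x‖ ≤ C) (a b : E) :
    ellV v a b ≤ √(2 * ((dist a b + 2 * C) * dist a b)) := by
  obtain ⟨a', ha'⟩ := hne a
  obtain ⟨b', hb'⟩ := hne b
  refine (ellV_le_sqrt_inner ha' hb').trans (Real.sqrt_le_sqrt ?_)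
  have hnorm : ‖b' - a'‖ ≤ ‖b - a‖ + 2 * C :=
    calc ‖b' - a'‖ = ‖(b - a) + (b' - b) - (a' - a)‖ := by congr 1; abel
      _ ≤ ‖b - a‖ + ‖b' - b‖ + ‖a' - a‖ := norm_sub_le_of_le (norm_add_le _ _) le_rfl
      _ ≤ ‖b - a‖ + 2 * C := by linarith [hC b b' hb', hC a a' ha']
  rw [dist_eq_norm']
  nlinarith [real_inner_le_norm (b' - a') (b - a), norm_nonneg (b - a)]

end EuclideanSpace

theorem stmt13_general {d : ℕ} (Ω : Set (EuclideanSpace ℝ (Fin d)))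
    (hΩb : Bornology.IsBounded Ω)
    (v : EuclideanSpace ℝ (Fin d) → Set (EuclideanSpace ℝ (Fin d)))
    (hv : MaxMonotone v) (hid : ∀ x ∉ closure Ω, v x = {x}) :
    (∀ a b, costV v a b = costV v b a) ∧
    (∀ a b c, costV v a c ≤ costV v a b + costV v b c) ∧
    Continuous (fun p : EuclideanSpace ℝ (Fin d) × EuclideanSpace ℝ (Fin d) =>
      costV v p.1 p.2) ∧
    (∀ a b, Real.sqrt 2 * |Metric.infDist a Ω - Metric.infDist b Ω| ≤ costV v a b ∧
      costV v a b ≤ ellV v a b) := by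
  obtain ⟨hmono, hne, -⟩ := hv
  have hC : ∀ x, ∀ x' ∈ v x, ‖x' - x‖ ≤ diam (closure Ω) := fun _ _ =>
    hmono.norm_sub_le_diam isClosed_closure hΩb.closure hid
  have hsymm : ∀ a b, costV v a b = costV v b a := chainCost_comm (ellV_comm v)
  have htri : ∀ a b c, costV v a c ≤ costV v a b + costV v b c :=
    chainCost_triangle fun _ _ => ellV_nonneg _ _
  have hle : ∀ a b, costV v a b ≤ ellV v a b := chainCost_le fun _ _ => ellV_nonneg _ _
  have habs : ∀ a b, |√2 * infDist a Ω - √2 * infDist b Ω| =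
      √2 * |infDist a Ω - infDist b Ω| := fun a b => by
    rw [← mul_sub, abs_mul, abs_of_nonneg (Real.sqrt_nonneg 2)]
  have hφ : ∀ a b, |√2 * infDist a Ω - √2 * infDist b Ω| ≤ ellV v a b := fun a b =>
    (habs a b).trans_le (sqrt_two_mul_abs_infDist_sub_le_ellV hmono hne hid a b)
  refine ⟨hsymm, htri, continuous_of_le_of_triangle hsymm htri
    (g := fun r => √(2 * ((r + 2 * diam (closure Ω)) * r))) ?_
    fun a b => (hle a b).trans (ellV_le_of_norm_sub_le hne hC a b), fun a b => ⟨?_, hle a b⟩⟩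
  · exact (by fun_prop : Continuous fun r => √(2 * ((r + 2 * diam (closure Ω)) * r))).tendsto' 0 0
      (by simp)
  · exact (habs a b).symm.trans_le (abs_sub_le_chainCost hφ a b)

theorem stmt13 {d : ℕ} (Ω : Set (EuclideanSpace ℝ (Fin d)))
    (hΩo : IsOpen Ω) (hΩb : Bornology.IsBounded Ω) (hΩc : Convex ℝ Ω) (hΩne : Ω.Nonempty)
    (v : EuclideanSpace ℝ (Fin d) → Set (EuclideanSpace ℝ (Fin d)))
    (hv : MaxMonotone v) (hid : ∀ x ∉ closure Ω, v x = {x}) :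
    (∀ a b, costV v a b = costV v b a) ∧
    (∀ a b c, costV v a c ≤ costV v a b + costV v b c) ∧
    Continuous (fun p : EuclideanSpace ℝ (Fin d) × EuclideanSpace ℝ (Fin d) =>
      costV v p.1 p.2) ∧
    (∀ a b, Real.sqrt 2 * |Metric.infDist a Ω - Metric.infDist b Ω| ≤ costV v a b ∧
      costV v a b ≤ ellV v a b) :=
  stmt13_general Ω hΩb v hv hid
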